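/- Let d ≥ 1, β > 0 and let U = V + g satisfy assumptions (A0) and (A1). Then F is continuously differentiable on ℝ^{2d} and for every a ∈ ℝ^{2d} and every j ∈ {1,…,2d}: ∂F/∂a_j(a) = 2β ∫_ℝ U'(a_j − t) dν_a(t). -/

import Mathlib

open MeasureTheory Real Filter

noncomputable section

/-- Boltzmann weight of the single odd site given the `2d` neighbouring values `a`. -/
def siteWeight (β : ℝ) (d : ℕ) (U : ℝ → ℝ) (a : Fin (2*d) → ℝ) (t : ℝ) : ℝ :=
  Real.exp (-(2*β) * ∑ k, U (a k - t))

/-- Normalising constant `Z_a`. -/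
def Zsite (β : ℝ) (d : ℕ) (U : ℝ → ℝ) (a : Fin (2*d) → ℝ) : ℝ :=
  ∫ t : ℝ, siteWeight β d U a t

/-- Single-site measure `ν_a`. -/
def nuSite (β : ℝ) (d : ℕ) (U : ℝ → ℝ) (a : Fin (2*d) → ℝ) : Measure ℝ :=
  volume.withDensity fun t => ENNReal.ofReal (siteWeight β d U a t / Zsite β d U a)

/-- Coarse-grained potential `F(a) = -log Z_a`. -/
def Fcg (β : ℝ) (d : ℕ) (U : ℝ → ℝ) (a : Fin (2*d) → ℝ) : ℝ :=
  - Real.log (Zsite β d U a)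

/-- Covariance of two functions under a measure on `ℝ`. -/
def covM (ν : Measure ℝ) (f g : ℝ → ℝ) : ℝ :=
  (∫ t, f t * g t ∂ν) - (∫ t, f t ∂ν) * (∫ t, g t ∂ν)

/-- Variance of the identity function under a measure on `ℝ`. -/
def varId (ν : Measure ℝ) : ℝ := covM ν (fun t => t) (fun t => t)

/-- First partial derivative. -/
def pd {n : ℕ} (Φ : (Fin n → ℝ) → ℝ) (i : Fin n) (a : Fin n → ℝ) : ℝ :=
  fderiv ℝ Φ a (Pi.single i 1)

/-- Second partial derivative. -/
def pd2 {n : ℕ} (Φ : (Fin n → ℝ) → ℝ) (i j : Fin n) (a : Fin n → ℝ) : ℝ :=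
  fderiv ℝ (fun x => fderiv ℝ Φ x (Pi.single i 1)) a (Pi.single j 1)

/-!
By (A0) the Boltzmann weight `exp (-2β ∑ₖ U (aₖ - t))` is bounded by a Gaussian in `t`, uniformly
for `a` in a ball. By (A1) `U''` is bounded, so `U'` grows at most linearly, and the `a`-derivative
of the weight is dominated by `(1 + |t|)` times that Gaussian. Hence `Z_a` can be differentiated
under the integral sign, with a derivative continuous in `a`; as `Z_a > 0`, the chain rule for
`F = -log Z` gives the formula.
-/

namespace GibbsSite

variable {ι : Type*} [Fintype ι] {β A B K R : ℝ} {U : ℝ → ℝ}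

/- `siteWeight` and `Fcg` over an arbitrary finite index set: for `ι = Fin (2 * d)` they are
`weight` and `freeEnergy` by definition. -/
def weight (β : ℝ) (U : ℝ → ℝ) (a : ι → ℝ) (t : ℝ) : ℝ :=
  exp (-(2 * β) * ∑ k, U (a k - t))

def freeEnergy (β : ℝ) (U : ℝ → ℝ) (a : ι → ℝ) : ℝ :=
  -log (∫ t, weight β U a t)

def weightFDeriv (β : ℝ) (U : ℝ → ℝ) (a : ι → ℝ) (t : ℝ) : (ι → ℝ) →L[ℝ] ℝ :=
  (-(2 * β) * weight β U a t) • ∑ k, deriv U (a k - t) • ContinuousLinearMap.proj k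

lemma weight_pos (a : ι → ℝ) (t : ℝ) : 0 < weight β U a t := exp_pos _

lemma continuous_weight (hU : Continuous U) (a : ι → ℝ) : Continuous (weight β U a) := by
  unfold weight; fun_prop

lemma continuous_weightFDeriv (hU : ContDiff ℝ 1 U) (a : ι → ℝ) :
    Continuous (weightFDeriv β U a) := by
  have := hU.continuous; have := hU.continuous_deriv le_rfl
  unfold weightFDeriv weight; fun_prop

lemma continuous_weightFDeriv_left (hU : ContDiff ℝ 1 U) (t : ℝ) :
    Continuous (weightFDeriv (ι := ι) β U · t) := by
  have := hU.continuous; have := hU.continuous_deriv le_rfl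
  unfold weightFDeriv weight; fun_prop

lemma hasFDerivAt_weight (hU : Differentiable ℝ U) (a : ι → ℝ) (t : ℝ) :
    HasFDerivAt (weight β U · t) (weightFDeriv β U a t) a := by
  have hsum : HasFDerivAt (fun x : ι → ℝ => ∑ k, U (x k - t))
      (∑ k, deriv U (a k - t) • ContinuousLinearMap.proj k) a :=
    HasFDerivAt.fun_sum fun k _ =>
      (hU _).hasDerivAt.comp_hasFDerivAt (f := fun x : ι → ℝ => x k - t) a
        ((hasFDerivAt_apply (𝕜 := ℝ) k a).sub_const t)
  simpa only [weightFDeriv, weight, smul_smul, mul_comm] using (hsum.const_mul (-(2 * β))).exp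

lemma weightFDeriv_apply_single [DecidableEq ι] (a : ι → ℝ) (t : ℝ) (j : ι) :
    weightFDeriv β U a t (Pi.single j 1) = -(2 * β) * weight β U a t * deriv U (a j - t) := by
  simp [weightFDeriv, Pi.single_apply]

lemma lower_bound_apply_sub_of_abs_le (hA : 0 ≤ A) (hUA : ∀ η, A * η ^ 2 - B ≤ U η) {x : ℝ}
    (hx : |x| ≤ R) (t : ℝ) : A / 2 * t ^ 2 - (A * R ^ 2 + B) ≤ U (x - t) := by
  -- `(x - t)² ≥ t² / 2 - x²` because the difference is `(2x - t)² / 2`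
  have hx2 : x ^ 2 ≤ R ^ 2 := sq_le_sq' (abs_le.1 hx).1 (abs_le.1 hx).2
  nlinarith [hUA (x - t), mul_nonneg hA (sq_nonneg (2 * x - t)), mul_le_mul_of_nonneg_left hx2 hA]

lemma weight_le (hβ : 0 ≤ β) (hA : 0 ≤ A) (hUA : ∀ η, A * η ^ 2 - B ≤ U η) {x : ι → ℝ}
    (hx : ∀ k, |x k| ≤ R) (t : ℝ) :
    weight β U x t ≤
      exp (2 * β * Fintype.card ι * (A * R ^ 2 + B)) * exp (-(β * A * Fintype.card ι) * t ^ 2) := by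
  have hsum : Fintype.card ι * (A / 2 * t ^ 2 - (A * R ^ 2 + B)) ≤ ∑ k, U (x k - t) := by
    simpa using Finset.card_nsmul_le_sum Finset.univ _ _
      fun k _ => lower_bound_apply_sub_of_abs_le hA hUA (hx k) t
  rw [weight, ← exp_add]
  gcongr
  nlinarith [mul_le_mul_of_nonneg_left hsum hβ]

lemma integrable_one_add_abs_mul_exp_neg_mul_sq {c : ℝ} (hc : 0 < c) :
    Integrable fun t : ℝ => (1 + |t|) * exp (-c * t ^ 2) := by
  have habs : Integrable fun t : ℝ => |t| * exp (-c * t ^ 2) := by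
    refine (integrable_rpow_mul_exp_neg_mul_sq hc (s := 1) (by norm_num)).abs.congr ?_
    filter_upwards with t
    rw [abs_mul, rpow_one, abs_of_pos (exp_pos _)]
  simpa only [add_mul, one_mul] using (integrable_exp_neg_mul_sq hc).fun_add habs

lemma norm_proj_le_one (k : ι) : ‖(ContinuousLinearMap.proj k : (ι → ℝ) →L[ℝ] ℝ)‖ ≤ 1 :=
  ContinuousLinearMap.opNorm_le_bound _ zero_le_one fun x => by
    simpa using norm_le_pi_norm x k

lemma norm_weightFDeriv_le (hβ : 0 ≤ β) (hA : 0 ≤ A) (hUA : ∀ η, A * η ^ 2 - B ≤ U η)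
    (hU' : ∀ s, |deriv U s| ≤ K * (1 + |s|)) (hR : 0 ≤ R) {x : ι → ℝ} (hx : ∀ k, |x k| ≤ R)
    (t : ℝ) :
    ‖weightFDeriv β U x t‖ ≤
      2 * β * Fintype.card ι * K * (1 + R) * exp (2 * β * Fintype.card ι * (A * R ^ 2 + B)) *
        ((1 + |t|) * exp (-(β * A * Fintype.card ι) * t ^ 2)) := by
  have hK : 0 ≤ K := by simpa using (abs_nonneg _).trans (hU' 0)
  have hderiv : ∀ k, ‖deriv U (x k - t) • (ContinuousLinearMap.proj k : (ι → ℝ) →L[ℝ] ℝ)‖ ≤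
      K * (1 + R) * (1 + |t|) := fun k => by
    rw [norm_smul, Real.norm_eq_abs]
    calc |deriv U (x k - t)| * ‖(ContinuousLinearMap.proj k : (ι → ℝ) →L[ℝ] ℝ)‖
        ≤ K * (1 + |x k - t|) * 1 := by gcongr; exacts [hU' _, norm_proj_le_one k]
      _ ≤ K * (1 + R) * (1 + |t|) := by
        nlinarith [abs_sub (x k) t, hx k, mul_nonneg hR (abs_nonneg t)]
  have hsum := (norm_sum_le _ _).trans (Finset.sum_le_sum fun k (_ : k ∈ Finset.univ) => hderiv k)
  rw [Finset.sum_const, Finset.card_univ, nsmul_eq_mul] at hsum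
  rw [weightFDeriv, norm_smul, Real.norm_eq_abs, abs_mul, abs_neg, abs_of_nonneg (by positivity),
    abs_of_pos (weight_pos x t)]
  calc 2 * β * weight β U x t * ‖∑ k, deriv U (x k - t) • ContinuousLinearMap.proj k‖
      ≤ 2 * β * (exp (2 * β * Fintype.card ι * (A * R ^ 2 + B)) *
          exp (-(β * A * Fintype.card ι) * t ^ 2)) *
        (Fintype.card ι * (K * (1 + R) * (1 + |t|))) := by
        gcongr; exact weight_le hβ hA hUA hx t
    _ = _ := by ring

lemma abs_apply_le_of_mem_ball {a x : ι → ℝ} (hx : x ∈ Metric.ball a 1) (k : ι) :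
    |x k| ≤ ‖a‖ + 1 := by
  have hxa : ‖x - a‖ < 1 := by rwa [← dist_eq_norm]
  calc |x k| ≤ ‖x‖ := by simpa using norm_le_pi_norm x k
    _ ≤ ‖x - a‖ + ‖a‖ := norm_le_norm_sub_add x a
    _ ≤ ‖a‖ + 1 := by linarith

variable [Nonempty ι]

lemma gaussian_rate_pos (hβ : 0 < β) (hA : 0 < A) : 0 < β * A * Fintype.card ι := by
  have := Fintype.card_pos (α := ι); positivity

lemma integrable_weight (hβ : 0 < β) (hA : 0 < A) (hUA : ∀ η, A * η ^ 2 - B ≤ U η)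
    (hU : Continuous U) (a : ι → ℝ) : Integrable (weight β U a) := by
  refine ((integrable_exp_neg_mul_sq (gaussian_rate_pos (ι := ι) hβ hA)).const_mul
    (exp (2 * β * Fintype.card ι * ((A * (‖a‖ + 1) ^ 2 + B))))).mono'
    (continuous_weight hU a).aestronglyMeasurable (Eventually.of_forall fun t => ?_)
  rw [Real.norm_eq_abs, abs_of_pos (weight_pos a t)]
  exact weight_le hβ.le hA.le hUA (abs_apply_le_of_mem_ball (Metric.mem_ball_self one_pos)) t

lemma integral_weight_pos (hβ : 0 < β) (hA : 0 < A) (hUA : ∀ η, A * η ^ 2 - B ≤ U η)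
    (hU : Continuous U) (a : ι → ℝ) : 0 < ∫ t, weight β U a t :=
  (integral_pos_iff_support_of_nonneg (fun t => (weight_pos a t).le)
    (integrable_weight hβ hA hUA hU a)).2 <| by
      simp [Function.support_eq_univ fun t => (weight_pos (β := β) (U := U) a t).ne']

lemma exists_integrable_bound_weightFDeriv (hβ : 0 < β) (hA : 0 < A)
    (hUA : ∀ η, A * η ^ 2 - B ≤ U η) (hU' : ∀ s, |deriv U s| ≤ K * (1 + |s|)) (a : ι → ℝ) :
    ∃ bound : ℝ → ℝ, Integrable bound ∧
      ∀ x ∈ Metric.ball a 1, ∀ t, ‖weightFDeriv β U x t‖ ≤ bound t :=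
  ⟨_, (integrable_one_add_abs_mul_exp_neg_mul_sq (gaussian_rate_pos (ι := ι) hβ hA)).const_mul _,
    fun _ hx t => norm_weightFDeriv_le hβ.le hA.le hUA hU' (by positivity)
      (abs_apply_le_of_mem_ball hx) t⟩

lemma integrable_weightFDeriv (hβ : 0 < β) (hA : 0 < A) (hUA : ∀ η, A * η ^ 2 - B ≤ U η)
    (hU : ContDiff ℝ 1 U) (hU' : ∀ s, |deriv U s| ≤ K * (1 + |s|)) (a : ι → ℝ) :
    Integrable (weightFDeriv β U a) := by
  obtain ⟨bound, hbound, hle⟩ := exists_integrable_bound_weightFDeriv hβ hA hUA hU' a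
  exact hbound.mono' (continuous_weightFDeriv hU a).aestronglyMeasurable
    (Eventually.of_forall (hle a (Metric.mem_ball_self one_pos)))

lemma hasFDerivAt_integral_weight (hβ : 0 < β) (hA : 0 < A) (hUA : ∀ η, A * η ^ 2 - B ≤ U η)
    (hU : ContDiff ℝ 1 U) (hU' : ∀ s, |deriv U s| ≤ K * (1 + |s|)) (a : ι → ℝ) :
    HasFDerivAt (fun x => ∫ t, weight β U x t) (∫ t, weightFDeriv β U a t) a := by
  obtain ⟨bound, hbound, hle⟩ := exists_integrable_bound_weightFDeriv hβ hA hUA hU' a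
  exact hasFDerivAt_integral_of_dominated_of_fderiv_le (Metric.ball_mem_nhds a one_pos)
    (Eventually.of_forall fun x => (continuous_weight hU.continuous x).aestronglyMeasurable)
    (integrable_weight hβ hA hUA hU.continuous a)
    (continuous_weightFDeriv hU a).aestronglyMeasurable
    (Eventually.of_forall fun t x hx => hle x hx t) hbound
    (Eventually.of_forall fun t x _ => hasFDerivAt_weight (hU.differentiable one_ne_zero) x t)

lemma continuous_integral_weightFDeriv (hβ : 0 < β) (hA : 0 < A)
    (hUA : ∀ η, A * η ^ 2 - B ≤ U η) (hU : ContDiff ℝ 1 U)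
    (hU' : ∀ s, |deriv U s| ≤ K * (1 + |s|)) :
    Continuous fun a : ι → ℝ => ∫ t, weightFDeriv β U a t :=
  continuous_iff_continuousAt.2 fun a => by
    obtain ⟨bound, hbound, hle⟩ := exists_integrable_bound_weightFDeriv hβ hA hUA hU' a
    exact continuousAt_of_dominated
      (Eventually.of_forall fun x => (continuous_weightFDeriv hU x).aestronglyMeasurable)
      (eventually_of_mem (Metric.ball_mem_nhds a one_pos) fun x hx =>
        Eventually.of_forall (hle x hx))
      hbound (Eventually.of_forall fun t => (continuous_weightFDeriv_left hU t).continuousAt)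

lemma hasFDerivAt_freeEnergy (hβ : 0 < β) (hA : 0 < A) (hUA : ∀ η, A * η ^ 2 - B ≤ U η)
    (hU : ContDiff ℝ 1 U) (hU' : ∀ s, |deriv U s| ≤ K * (1 + |s|)) (a : ι → ℝ) :
    HasFDerivAt (freeEnergy β U)
      (-((∫ t, weight β U a t)⁻¹ • ∫ t, weightFDeriv β U a t)) a :=
  ((hasFDerivAt_integral_weight hβ hA hUA hU hU' a).log
    (integral_weight_pos hβ hA hUA hU.continuous a).ne').neg

lemma contDiff_freeEnergy (hβ : 0 < β) (hA : 0 < A) (hUA : ∀ η, A * η ^ 2 - B ≤ U η)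
    (hU : ContDiff ℝ 1 U) (hU' : ∀ s, |deriv U s| ≤ K * (1 + |s|)) :
    ContDiff ℝ 1 (freeEnergy (ι := ι) β U) := by
  have hF := hasFDerivAt_freeEnergy (ι := ι) hβ hA hUA hU hU'
  have hZ : Continuous fun a : ι → ℝ => ∫ t, weight β U a t := continuous_iff_continuousAt.2
    fun a => (hasFDerivAt_integral_weight hβ hA hUA hU hU' a).continuousAt
  rw [contDiff_one_iff_fderiv, funext fun a => (hF a).fderiv]
  exact ⟨fun a => (hF a).differentiableAt,
    ((hZ.inv₀ fun a => (integral_weight_pos hβ hA hUA hU.continuous a).ne').smul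
      (continuous_integral_weightFDeriv hβ hA hUA hU hU')).neg⟩

lemma fderiv_freeEnergy_single [DecidableEq ι] (hβ : 0 < β) (hA : 0 < A)
    (hUA : ∀ η, A * η ^ 2 - B ≤ U η) (hU : ContDiff ℝ 1 U)
    (hU' : ∀ s, |deriv U s| ≤ K * (1 + |s|)) (a : ι → ℝ) (j : ι) :
    fderiv ℝ (freeEnergy β U) a (Pi.single j 1) =
      2 * β * ((∫ t, weight β U a t)⁻¹ * ∫ t, weight β U a t * deriv U (a j - t)) := by
  rw [(hasFDerivAt_freeEnergy hβ hA hUA hU hU' a).fderiv, neg_apply, smul_apply, smul_eq_mul,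
    ContinuousLinearMap.integral_apply (integrable_weightFDeriv hβ hA hUA hU hU' a)]
  simp_rw [weightFDeriv_apply_single, mul_assoc, integral_const_mul]
  ring

end GibbsSite

lemma integral_nuSite {β : ℝ} {d : ℕ} {U : ℝ → ℝ} (hU : Measurable U) (a : Fin (2 * d) → ℝ)
    (f : ℝ → ℝ) :
    ∫ t, f t ∂nuSite β d U a = (Zsite β d U a)⁻¹ * ∫ t, siteWeight β d U a t * f t := by
  have hW : ∀ t, 0 ≤ siteWeight β d U a t := fun t => (exp_pos _).le
  have hZ : 0 ≤ Zsite β d U a := integral_nonneg hW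
  have hmeas : Measurable (siteWeight β d U a) := by
    unfold siteWeight; fun_prop
  rw [nuSite, integral_withDensity_eq_integral_toReal_smul (hmeas.div_const _).ennreal_ofReal
    (Eventually.of_forall fun _ => ENNReal.ofReal_lt_top), ← integral_const_mul]
  congr 1 with t
  rw [ENNReal.toReal_ofReal (div_nonneg (hW t) hZ), smul_eq_mul]
  ring

lemma deriv_deriv_add {𝕜 F : Type*} [NontriviallyNormedField 𝕜] [NormedAddCommGroup F]
    [NormedSpace 𝕜 F] {f g : 𝕜 → F} (hf : ContDiff 𝕜 2 f) (hg : ContDiff 𝕜 2 g) :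
    deriv (deriv (f + g)) = deriv (deriv f) + deriv (deriv g) := by
  have hderiv : deriv (f + g) = deriv f + deriv g :=
    funext fun s => deriv_add (hf.differentiable two_ne_zero s) (hg.differentiable two_ne_zero s)
  rw [hderiv]
  exact funext fun s => deriv_add (hf.differentiable_deriv_two s) (hg.differentiable_deriv_two s)

lemma abs_le_mul_one_add_abs_of_abs_deriv_le {f : ℝ → ℝ} {M : ℝ} (hf : Differentiable ℝ f)
    (hM : ∀ s, |deriv f s| ≤ M) (s : ℝ) : |f s| ≤ (|f 0| + M) * (1 + |s|) := by
  have hlip := Convex.norm_image_sub_le_of_norm_deriv_le (fun x _ => hf x)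
    (fun x _ => hM x) convex_univ (Set.mem_univ 0) (Set.mem_univ s)
  simp only [Real.norm_eq_abs, sub_zero] at hlip
  nlinarith [abs_sub_abs_le_abs_sub (f s) (f 0), (abs_nonneg _).trans (hM 0), abs_nonneg (f 0),
    abs_nonneg s]

theorem statement8_general
    {d : ℕ} {β A B C₀ C₁ C₂ : ℝ} {U V g : ℝ → ℝ}
    (hd : 1 ≤ d) (hβ : 0 < β)
    -- (A0)
    (hA : 0 < A) (hA0 : ∀ η : ℝ, A * η ^ 2 - B ≤ U η)
    -- (A1)
    (hsum : ∀ s, U s = V s + g s)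
    (hV : ContDiff ℝ 2 V) (hg : ContDiff ℝ 2 g)
    (hV'' : ∀ s, C₁ ≤ deriv (deriv V) s ∧ deriv (deriv V) s ≤ C₂)
    (hg'' : ∀ s, -C₀ ≤ deriv (deriv g) s ∧ deriv (deriv g) s ≤ 0) :
    ContDiff ℝ 1 (Fcg β d U) ∧
    ∀ (a : Fin (2*d) → ℝ) (j : Fin (2*d)),
      pd (Fcg β d U) j a = 2*β * ∫ t, deriv U (a j - t) ∂(nuSite β d U a) := by
  have : Nonempty (Fin (2 * d)) := ⟨⟨0, by omega⟩⟩
  obtain rfl : U = V + g := funext hsum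
  have hU : ContDiff ℝ 2 (V + g) := hV.add hg
  have hU'' : ∀ s, |deriv (deriv (V + g)) s| ≤ max |C₁| |C₂| + C₀ := fun s => by
    rw [deriv_deriv_add hV hg, Pi.add_apply]
    refine (abs_add_le _ _).trans (add_le_add (abs_le_max_abs_abs (hV'' s).1 (hV'' s).2) ?_)
    exact abs_le.2 ⟨(hg'' s).1, by linarith [hg'' s]⟩
  have hU' := abs_le_mul_one_add_abs_of_abs_deriv_le hU.differentiable_deriv_two hU''
  refine ⟨GibbsSite.contDiff_freeEnergy hβ hA hA0 (hU.of_le one_le_two) hU', fun a j => ?_⟩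
  rw [integral_nuSite hU.continuous.measurable]
  exact GibbsSite.fderiv_freeEnergy_single hβ hA hA0 (hU.of_le one_le_two) hU' a j

/-- first partial derivatives of `F`. -/
theorem statement8
    {d : ℕ} {β A B C₀ C₁ C₂ : ℝ} {U V g : ℝ → ℝ}
    (hd : 1 ≤ d) (hβ : 0 < β)
    -- (A0)
    (hUcont : Continuous U) (hA : 0 < A) (hA0 : ∀ η : ℝ, A * η ^ 2 - B ≤ U η)
    -- (A1)
    (hsum : ∀ s, U s = V s + g s)
    (hV : ContDiff ℝ 2 V) (hg : ContDiff ℝ 2 g)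
    (hC₁ : 0 < C₁) (hC₁₂ : C₁ < C₂) (hC₂₀ : C₂ < C₀)
    (hV'' : ∀ s, C₁ ≤ deriv (deriv V) s ∧ deriv (deriv V) s ≤ C₂)
    (hg'' : ∀ s, -C₀ ≤ deriv (deriv g) s ∧ deriv (deriv g) s ≤ 0) :
    ContDiff ℝ 1 (Fcg β d U) ∧
    ∀ (a : Fin (2*d) → ℝ) (j : Fin (2*d)),
      pd (Fcg β d U) j a = 2*β * ∫ t, deriv U (a j - t) ∂(nuSite β d U a) :=
  statement8_general hd hβ hA hA0 hsum hV hg hV'' hg''
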